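/- For all r, s ∈ ℤ, every β ∈ ℤ, and all indices 1 ≤ i, j ≤ n, the trace cocycle satisfies c_Lie(L_r^{(β)}, E_{ij}^s) = δ_{r,−s}·δ_{ij}·(r(r+1)/2)·(1−2β), where L_r^{(β)} is the endomorphism of V given by v ↦ z^{r+1} • v′ + β(r+1)·z^r • v, and E_{ij}^s is the endomorphism whose m-th component of E_{ij}^s(v) is δ_{mi}·z^s·v_j. -/

import Mathlib

/-!
On the basis vector `z^m e_k` both operators act by shifting the degree: `L_r^{(β)}` multiplies
`z^m e_k` by `m + β(r+1)` and shifts it to `z^{m+r} e_k`, while `E_{ij}^s` sends it to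
`δ_{jk} z^{m+s} e_i`. So for `m < 0` the diagonal entry of `L^{+−}E^{−+} − E^{+−}L^{−+}` at
`z^m e_k` vanishes unless `k = i = j` and `r + s = 0`, in which case it is
`[r ≤ m] (m − r + β(r+1)) − [−r ≤ m] (m + β(r+1))`. For each sign of `r` only one of the two
brackets survives, and summing the surviving arithmetic progression over `m < 0` gives
`r(r+1)/2 − r β(r+1)`.
-/

noncomputable section

abbrev K : Type := LaurentSeries ℂ

abbrev V (n : ℕ) : Type := Fin n → K

/-- The formal derivative of a Laurent series. -/
def fd (f : K) : K :=
  ⟨fun k => ((k + 1 : ℤ) : ℂ) * f.coeff (k + 1), by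
    apply Set.IsPWO.mono (f.isPWO_support.image_of_monotone
      (f := fun x => x - 1) (fun _ _ h => sub_le_sub_right h 1))
    intro k hk
    have : f.coeff (k + 1) ≠ 0 := by
      intro h
      simp [Function.mem_support, h] at hk
    exact ⟨k + 1, this, by ring⟩⟩

/-- Truncation of a Laurent series to its coefficients in negative degrees: the
projection onto `K₋` along `K₊`. -/
def tneg (f : K) : K :=
  ⟨fun k => if k < 0 then f.coeff k else 0, by
    refine f.isPWO_support.mono (fun k hk => ?_)
    simp only [Function.mem_support] at hk ⊢
    by_cases h : k < 0
    · simpa [h] using hk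
    · simp [h] at hk⟩

/-- Truncation of a Laurent series to its coefficients in non-negative degrees: the
projection onto `K₊` along `K₋`. -/
def tpos (f : K) : K :=
  ⟨fun k => if 0 ≤ k then f.coeff k else 0, by
    refine f.isPWO_support.mono (fun k hk => ?_)
    simp only [Function.mem_support] at hk ⊢
    by_cases h : (0:ℤ) ≤ k
    · simpa [h] using hk
    · simp [h] at hk⟩

/-- Componentwise projection of `V` onto `V₋` along `V₊`. -/
def projM {n : ℕ} (v : V n) : V n := fun i => tneg (v i)

/-- Componentwise projection of `V` onto `V₊` along `V₋`. -/
def projP {n : ℕ} (v : V n) : V n := fun i => tpos (v i)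

/-- The basis vector `z^m · e_i` of `V`. -/
def bas (n : ℕ) (m : ℤ) (i : Fin n) : V n :=
  fun j => if j = i then HahnSeries.single m 1 else 0

/-- `T₁^{+−} ∘ T₂^{−+} − T₂^{+−} ∘ T₁^{−+}` as a map `V₋ → V₋` (evaluated through the
projections onto `V₋` and `V₊`). -/
def commPM {n : ℕ} (T₁ T₂ : V n → V n) (v : V n) : V n :=
  projM (T₁ (projP (T₂ (projM v)))) - projM (T₂ (projP (T₁ (projM v))))

/-- The trace cocycle `c_Lie(T₁, T₂) = Tr(T₁^{+−} T₂^{−+} − T₂^{+−} T₁^{−+})`, computed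
as the (finitely supported) sum of the diagonal coefficients in the basis
`{z^m e_i : m < 0, i}` of `V₋`. -/
def cLie (n : ℕ) (T₁ T₂ : V n → V n) : ℂ :=
  ∑ᶠ (m : ℤ) (_ : m < 0) (i : Fin n), ((commPM T₁ T₂ (bas n m i)) i).coeff m

/-- The `β`-twisted Virasoro operator `L_r^{(β)} : v ↦ z^{r+1} • v′ + β(r+1) z^r • v`,
acting componentwise on `V`. -/
def Lb (n : ℕ) (β r : ℤ) : V n → V n :=
  fun v i => HahnSeries.single (r + 1) 1 * fd (v i)
    + (β * (r + 1)) • (HahnSeries.single r 1 * v i)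

/-- The current-algebra generator `E_{ij}^s`, whose `m`-th component of `E_{ij}^s v` is
`δ_{mi} · z^s · v_j`. -/
def Eb (n : ℕ) (i j : Fin n) (s : ℤ) : V n → V n :=
  fun v m => if m = i then HahnSeries.single s 1 * v j else 0

section Summation

variable {M : Type*} [AddCommGroup M]

lemma finsum_lt_ite_le_sub_ite_le (a a' b : ℤ) (f g : ℤ → M) :
    ∑ᶠ (m : ℤ) (_ : m < b), ((if a ≤ m then f m else 0) - (if a' ≤ m then g m else 0)) =
      ∑ m ∈ Finset.Ico a b, f m - ∑ m ∈ Finset.Ico a' b, g m := by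
  have hind : ∀ m, (∑ᶠ (_ : m < b), ((if a ≤ m then f m else 0) - (if a' ≤ m then g m else 0))) =
      (Set.Ico a b).indicator f m - (Set.Ico a' b).indicator g m := by
    intro m
    by_cases hm : m < b <;> simp [finsum_eq_if, Set.indicator_apply, hm]
  rw [finsum_congr hind,
    finsum_sub_distrib ((Set.finite_Ico a b).subset Set.support_indicator_subset)
      ((Set.finite_Ico a' b).subset Set.support_indicator_subset),
    ← finsum_mem_def, ← finsum_mem_def, ← Finset.coe_Ico, ← Finset.coe_Ico,
    finsum_mem_coe_finset, finsum_mem_coe_finset]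

end Summation

section ArithmeticProgression

variable {R : Type*} [CommRing R]

lemma two_mul_sum_Ico_neg_natCast (N : ℕ) (d : R) :
    2 * ∑ m ∈ Finset.Ico (-(N : ℤ)) 0, ((m : R) + d) = N * (2 * d - N - 1) := by
  induction N with
  | zero => simp
  | succ N ih =>
    have hIco : Finset.Ico (-((N + 1 : ℕ) : ℤ)) 0 =
        insert (-((N + 1 : ℕ) : ℤ)) (Finset.Ico (-(N : ℤ)) 0) := by
      ext
      simp only [Finset.mem_Ico, Finset.mem_insert]
      omega
    rw [hIco, Finset.sum_insert (by simp), mul_add, ih]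
    push_cast
    ring

lemma two_mul_sum_Ico_sub_sum_Ico_neg (r : ℤ) (c : R) :
    2 * (∑ m ∈ Finset.Ico r 0, ((m : R) + (c - r)) - ∑ m ∈ Finset.Ico (-r) 0, ((m : R) + c)) =
      r * (r + 1) - 2 * r * c := by
  rcases le_total r 0 with hr | hr
  · obtain ⟨N, rfl⟩ := Int.exists_eq_neg_ofNat hr
    rw [Finset.Ico_eq_empty_of_le (a := - -(N : ℤ)) (by omega), Finset.sum_empty, sub_zero,
      two_mul_sum_Ico_neg_natCast]
    push_cast
    ring
  · lift r to ℕ using hr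
    rw [Finset.Ico_eq_empty_of_le (a := (r : ℤ)) (by omega), Finset.sum_empty, zero_sub,
      mul_neg, two_mul_sum_Ico_neg_natCast]
    push_cast
    ring

end ArithmeticProgression

lemma fd_single (m : ℤ) (c : ℂ) :
    fd (HahnSeries.single m c) = HahnSeries.single (m - 1) (m * c) := by
  ext k
  simp only [fd, HahnSeries.coeff_single]
  by_cases h : k = m - 1
  · subst h
    simp
  · rw [if_neg (by omega), if_neg h, mul_zero]

lemma tneg_single (m : ℤ) (c : ℂ) :
    tneg (HahnSeries.single m c) = if m < 0 then HahnSeries.single m c else 0 := by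
  ext k
  by_cases hm : m < 0 <;> by_cases hk : k = m <;> simp [tneg, hm, hk, HahnSeries.coeff_single]

lemma tpos_single (m : ℤ) (c : ℂ) :
    tpos (HahnSeries.single m c) = if 0 ≤ m then HahnSeries.single m c else 0 := by
  ext k
  by_cases hm : 0 ≤ m <;> by_cases hk : k = m <;> simp [tpos, hm, hk, HahnSeries.coeff_single]

@[simp] lemma fd_zero : fd 0 = 0 := by
  ext k; simp [fd]

@[simp] lemma tneg_zero : tneg 0 = 0 := by
  ext k; simp [tneg]

@[simp] lemma tpos_zero : tpos 0 = 0 := by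
  ext k; simp [tpos]

section Operators

variable {n : ℕ}

@[simp] lemma projM_zero : projM (0 : V n) = 0 := funext fun _ => tneg_zero

@[simp] lemma projP_zero : projP (0 : V n) = 0 := funext fun _ => tpos_zero

@[simp] lemma Lb_zero (β r : ℤ) : Lb n β r 0 = 0 := by
  funext l; simp [Lb]

@[simp] lemma Eb_zero (i j : Fin n) (s : ℤ) : Eb n i j s 0 = 0 := by
  funext l; simp [Eb]

lemma projM_smul (c : ℂ) (v : V n) : projM (c • v) = c • projM v := by
  funext l; ext k; simp [projM, tneg]

lemma projP_smul (c : ℂ) (v : V n) : projP (c • v) = c • projP v := by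
  funext l; ext k; simp [projP, tpos]

lemma Eb_smul (i j : Fin n) (s : ℤ) (c : ℂ) (v : V n) :
    Eb n i j s (c • v) = c • Eb n i j s v := by
  funext l
  by_cases hl : l = i
  · simp only [Eb, hl, if_true, Pi.smul_apply, ← HahnSeries.C_mul_eq_smul]
    exact mul_left_comm _ _ _
  · simp [Eb, hl]

lemma projM_bas (m : ℤ) (k : Fin n) : projM (bas n m k) = if m < 0 then bas n m k else 0 := by
  funext l
  by_cases hm : m < 0 <;> by_cases hl : l = k <;> simp [projM, bas, hm, hl, tneg_single]

lemma projP_bas (m : ℤ) (k : Fin n) : projP (bas n m k) = if 0 ≤ m then bas n m k else 0 := by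
  funext l
  by_cases hm : 0 ≤ m <;> by_cases hl : l = k <;> simp [projP, bas, hm, hl, tpos_single]

lemma Lb_bas (β r m : ℤ) (k : Fin n) :
    Lb n β r (bas n m k) = ((m : ℂ) + β * (r + 1)) • bas n (m + r) k := by
  funext l
  by_cases hl : l = k
  · simp only [Lb, bas, hl, if_true, Pi.smul_apply, fd_single, HahnSeries.single_mul_single,
      ← Int.cast_smul_eq_zsmul ℂ, show r + 1 + (m - 1) = m + r by ring]
    ext p
    simp only [HahnSeries.coeff_add, HahnSeries.coeff_smul, HahnSeries.coeff_single, add_comm r m]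
    split_ifs <;> simp
  · ext p
    simp [Lb, bas, hl]

lemma Eb_bas (i j : Fin n) (s m : ℤ) (k : Fin n) :
    Eb n i j s (bas n m k) = if j = k then bas n (m + s) i else 0 := by
  funext l
  by_cases hl : l = i <;> by_cases hj : j = k <;> simp [Eb, bas, hl, hj, add_comm]

lemma coeff_projM_bas_apply (p m : ℤ) (i l : Fin n) :
    (projM (bas n p i) l).coeff m = if l = i ∧ m = p ∧ p < 0 then 1 else 0 := by
  by_cases hp : p < 0 <;> by_cases hl : l = i <;>
    simp [projM_bas, hp, hl, bas, HahnSeries.coeff_single]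

lemma commPM_Lb_Eb_bas (β r s : ℤ) (i j : Fin n) {m : ℤ} (hm : m < 0) (k : Fin n) :
    commPM (Lb n β r) (Eb n i j s) (bas n m k) =
      if j = k then
        (if 0 ≤ m + s then (((m + s : ℤ) : ℂ) + β * (r + 1)) • projM (bas n (m + r + s) i)
          else 0) -
        (if 0 ≤ m + r then ((m : ℂ) + β * (r + 1)) • projM (bas n (m + r + s) i) else 0)
      else 0 := by
  by_cases hj : j = k
  · rw [commPM, projM_bas m k, if_pos hm, Eb_bas, Lb_bas, projP_smul, projP_bas, if_pos hj,
      if_pos hj, projP_bas]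
    split_ifs <;> simp [Lb_bas, Eb_bas, Eb_smul, projM_smul, hj, add_right_comm m s r]
  · rw [commPM, projM_bas m k, if_pos hm, Eb_bas, Lb_bas, projP_smul, projP_bas, if_neg hj,
      if_neg hj]
    split_ifs <;> simp [Eb_smul, Eb_bas, hj]

lemma coeff_commPM_Lb_Eb_bas_diag (β r s : ℤ) (i j : Fin n) {m : ℤ} (hm : m < 0) (k : Fin n) :
    ((commPM (Lb n β r) (Eb n i j s) (bas n m k)) k).coeff m =
      if k = i ∧ r = -s ∧ i = j then
        (if r ≤ m then (m : ℂ) + (β * (r + 1) - r) else 0) -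
        (if -r ≤ m then (m : ℂ) + β * (r + 1) else 0)
      else 0 := by
  rw [commPM_Lb_Eb_bas β r s i j hm]
  by_cases hjk : j = k
  swap
  · split_ifs <;> simp_all
  subst hjk
  by_cases hji : j = i
  swap
  · simp only [hji, false_and, if_false, if_true]
    split_ifs <;> simp [coeff_projM_bas_apply, hji]
  subst hji
  by_cases hrs : r = -s
  · obtain rfl : s = -r := by omega
    simp only [add_neg_cancel_right, neg_neg, and_self, if_true]
    split_ifs <;> simp [coeff_projM_bas_apply, hm] <;> first | omega | ring
  · have hrs' : r + s ≠ 0 := by omega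
    simp only [hrs, false_and, and_false, if_false, if_true]
    split_ifs <;> simp [coeff_projM_bas_apply, add_assoc, hrs']

end Operators

theorem cLie_mixed_general (n : ℕ) (r s β : ℤ) (i j : Fin n) :
    cLie n (Lb n β r) (Eb n i j s) =
      if r = -s ∧ i = j then ((r : ℂ) * (r + 1) / 2) * (1 - 2 * (β : ℂ)) else 0 := by
  have hdiag (m : ℤ) (hm : m < 0) :
      ∑ᶠ k : Fin n, ((commPM (Lb n β r) (Eb n i j s) (bas n m k)) k).coeff m =
        if r = -s ∧ i = j then
          (if r ≤ m then (m : ℂ) + (β * (r + 1) - r) else 0) -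
          (if -r ≤ m then (m : ℂ) + β * (r + 1) else 0)
        else 0 := by
    simp only [coeff_commPM_Lb_Eb_bas_diag β r s i j hm, finsum_eq_sum_of_fintype, ite_and,
      Finset.sum_ite_eq', Finset.mem_univ, if_true]
  unfold cLie
  rw [finsum_congr fun m => finsum_congr fun hm => hdiag m hm]
  split_ifs
  · rw [finsum_lt_ite_le_sub_ite_le]
    linear_combination (1 / 2 : ℂ) * two_mul_sum_Ico_sub_sum_Ico_neg r ((β : ℂ) * (r + 1))
  · simp

/-- The mixed value of the trace cocycle:
`c_Lie(L_r^{(β)}, E_{ij}^s) = δ_{r,−s} · δ_{ij} · (r(r+1)/2) · (1−2β)`. -/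
theorem cLie_mixed (n : ℕ) (hn : 1 ≤ n) (r s β : ℤ) (i j : Fin n) :
    cLie n (Lb n β r) (Eb n i j s) =
      if r = -s ∧ i = j then ((r : ℂ) * (r + 1) / 2) * (1 - 2 * (β : ℂ)) else 0 :=
  cLie_mixed_general n r s β i j

end
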